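/- arXiv:1301.2671 — 4 statements merged into one kernel-verified Lean document; each statement's English description precedes it below -/
import Mathlib

section
/- Let (A, ‖·‖) be a commutative unital normed algebra over ℂ satisfying ‖x²‖ = ‖x‖² for all x. Then the closed unit ball of A is the largest closed, idempotent, absolutely convex, bounded subset of A: it has all these properties and contains every idempotent bounded subset of A. -/
theorem stmt_3 {A : Type*} [NormedCommRing A] [NormedAlgebra ℂ A]
    (hsq : ∀ x : A, ‖x * x‖ = ‖x‖ ^ 2) :
    IsClosed (Metric.closedBall (0 : A) 1) ∧
    (∀ x ∈ Metric.closedBall (0 : A) 1, ∀ y ∈ Metric.closedBall (0 : A) 1,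
      x * y ∈ Metric.closedBall (0 : A) 1) ∧
    Balanced ℂ (Metric.closedBall (0 : A) 1) ∧
    Convex ℝ (Metric.closedBall (0 : A) 1) ∧
    Bornology.IsBounded (Metric.closedBall (0 : A) 1) ∧
    (∀ C : Set A, (∀ x ∈ C, ∀ y ∈ C, x * y ∈ C) → Bornology.IsBounded C →
      C ⊆ Metric.closedBall (0 : A) 1) := by
  refine ⟨Metric.isClosed_closedBall, ?_, (fun a ha x hx => by
      obtain ⟨y, hy, rfl⟩ := hx
      simp only [Metric.mem_closedBall, dist_zero_right] at *
      rw [norm_smul]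
      exact mul_le_one₀ ha (norm_nonneg y) hy), convex_closedBall 0 1,
    Metric.isBounded_closedBall, ?_⟩
  · intro x hx y hy
    simp only [Metric.mem_closedBall, dist_zero_right] at *
    calc ‖x * y‖ ≤ ‖x‖ * ‖y‖ := norm_mul_le x y
    _ ≤ 1 * 1 := by exact mul_le_mul hx hy (norm_nonneg y) zero_le_one
    _ = 1 := one_mul 1
  · intro C hmul hbdd x hx
    obtain ⟨M, hM⟩ := hbdd.exists_norm_le
    simp only [Metric.mem_closedBall, dist_zero_right]
    by_contra h
    push_neg at h
    have hpow : ∀ n : ℕ, x ^ (2 ^ n) ∈ C ∧ ‖x ^ (2 ^ n)‖ = ‖x‖ ^ (2 ^ n) := by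
      intro n
      induction n with
      | zero => simpa using hx
      | succ n ih =>
        constructor
        · rw [pow_succ, pow_mul, sq]
          exact hmul _ ih.1 _ ih.1
        · rw [pow_succ, pow_mul, sq, hsq, ih.2, ← pow_mul]
    obtain ⟨n, hn⟩ := pow_unbounded_of_one_lt M h
    have h1 : ‖x‖ ^ n ≤ ‖x‖ ^ (2 ^ n) :=
      pow_le_pow_right₀ h.le (Nat.lt_two_pow_self (n := n)).le
    have := hM _ (hpow n).1
    rw [(hpow n).2] at this
    linarith
end

section
/- Let A and B be commutative unital normed algebras over ℂ, with A satisfying ‖x²‖ = ‖x‖² for all x, and let Φ : A → B be an injective unital algebra homomorphism. If for every nonzero continuous multiplicative linear functional f on A there exists a continuous multiplicative linear functional F on the closure of the range of Φ with f = F ∘ Φ, and the spectral radius on the closure of Im Φ is bounded by the norm, then Φ⁻¹ restricted to Im Φ is continuous. -/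
open UniformSpace Filter Topology
open scoped ENNReal NNReal

theorem stmt_4 {A B : Type*} [NormedCommRing A] [NormedAlgebra ℂ A]
    [NormedCommRing B] [NormedAlgebra ℂ B]
    (hsq : ∀ x : A, ‖x * x‖ = ‖x‖ ^ 2)
    (Φ : A →ₐ[ℂ] B) (hinj : Function.Injective Φ)
    (hlift : ∀ f ∈ WeakDual.characterSpace ℂ A,
      ∃ F ∈ WeakDual.characterSpace ℂ (Φ.range.topologicalClosure),
        ∀ x : A, f x = F ⟨Φ x, Φ.range.le_topologicalClosure ⟨x, rfl⟩⟩)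
    (hr : ∀ y : Φ.range.topologicalClosure, spectralRadius ℂ y ≤ ‖y‖₊) :
    ContinuousOn (Function.invFun Φ) (Set.range Φ) := by
  have key : ∀ x : A, ‖x‖ ≤ ‖Φ x‖ := by
    rcases subsingleton_or_nontrivial A with hA | hA
    · intro x
      have : x = 0 := Subsingleton.elim x 0
      simp [this]
    intro x
    have hsq' : ∀ y : Completion A, ‖y * y‖ = ‖y‖ ^ 2 := by
      intro y
      refine Completion.induction_on y ?_ ?_
      · exact isClosed_eq ((continuous_id.mul continuous_id).norm)
          (continuous_norm.pow 2)
      · intro a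
        rw [← Completion.coe_mul, Completion.norm_coe, Completion.norm_coe, hsq]
    have hpow : ∀ (y : Completion A) (k : ℕ), ‖y ^ (2 ^ k)‖ = ‖y‖ ^ (2 ^ k) := by
      intro y k
      induction k with
      | zero => simp
      | succ k ih =>
        have h1 : y ^ 2 ^ (k + 1) = y ^ 2 ^ k * y ^ 2 ^ k := by
          rw [← pow_add]; congr 1; omega
        rw [h1, hsq', ih, ← pow_mul, ← pow_succ]
    have hnt : Nontrivial (Completion A) := by
      refine ⟨⟨0, 1, fun h => ?_⟩⟩
      have h0 : ((0 : A) : Completion A) = ((1 : A) : Completion A) := by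
        rw [Completion.coe_zero, Completion.coe_one]; exact h
      exact zero_ne_one (Completion.coe_injective A h0)
    -- spectral radius of x in the completion equals ‖x‖₊
    have hsr : spectralRadius ℂ ((x : Completion A)) = (‖x‖₊ : ℝ≥0∞) := by
      have h1 := spectrum.pow_nnnorm_pow_one_div_tendsto_nhds_spectralRadius
        ((x : Completion A))
      have h2 : Tendsto (fun k : ℕ =>
          (‖(x : Completion A) ^ (2 ^ k)‖₊ : ℝ≥0∞) ^ (1 / (2 ^ k : ℕ) : ℝ)) atTop
          (𝓝 (spectralRadius ℂ ((x : Completion A)))) :=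
        h1.comp (tendsto_pow_atTop_atTop_of_one_lt (α := ℕ) one_lt_two)
      have h3 : ∀ k : ℕ, (‖(x : Completion A) ^ (2 ^ k)‖₊ : ℝ≥0∞) ^ (1 / (2 ^ k : ℕ) : ℝ)
          = (‖x‖₊ : ℝ≥0∞) := by
        intro k
        have hn : ‖(x : Completion A) ^ (2 ^ k)‖₊ = ‖x‖₊ ^ (2 ^ k) := by
          ext
          push_cast
          rw [hpow, Completion.norm_coe]
        rw [hn]
        rw [ENNReal.coe_pow, ← ENNReal.rpow_natCast ((‖x‖₊ : ℝ≥0∞)) (2 ^ k),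
          ← ENNReal.rpow_mul]
        have : ((2 ^ k : ℕ) : ℝ) * (1 / (2 ^ k : ℕ) : ℝ) = 1 := by
          rw [mul_one_div, div_self]
          positivity
        rw [mul_one_div, div_self (ne_of_gt (by positivity)), ENNReal.rpow_one]
      rw [tendsto_congr h3] at h2
      exact tendsto_nhds_unique h2 tendsto_const_nhds
    -- every point of the spectrum is bounded by ‖Φ x‖₊
    have hub : spectralRadius ℂ ((x : Completion A)) ≤ (‖Φ x‖₊ : ℝ≥0∞) := by
      refine iSup₂_le fun z hz => ?_
      obtain ⟨φ, hφ⟩ := WeakDual.CharacterSpace.mem_spectrum_iff_exists.mp hz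
      -- restrict the character φ of the completion to A
      set f : WeakDual ℂ A :=
        (φ : WeakDual ℂ (Completion A)).comp (Completion.toComplL : A →L[ℂ] Completion A)
        with hf
      have hfapp : ∀ a : A, f a = φ ((a : Completion A)) := fun a => rfl
      have hfmem : f ∈ WeakDual.characterSpace ℂ A := by
        constructor
        · intro h0
          have h1 : f 1 = 1 := by
            rw [hfapp, Completion.coe_one, map_one]
          rw [h0] at h1
          rw [show ((0 : WeakDual ℂ A) 1 = (0 : ℂ)) from rfl] at h1
          exact zero_ne_one h1
        · intro a b
          rw [hfapp, hfapp, hfapp, Completion.coe_mul, map_mul]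
      obtain ⟨F, hF, hFx⟩ := hlift f hfmem
      have hz' : z = (⟨F, hF⟩ : WeakDual.characterSpace ℂ (Φ.range.topologicalClosure))
          ⟨Φ x, Φ.range.le_topologicalClosure ⟨x, rfl⟩⟩ := by
        rw [← hφ, ← hfapp, hFx x]; rfl
      set y : Φ.range.topologicalClosure := ⟨Φ x, Φ.range.le_topologicalClosure ⟨x, rfl⟩⟩
      have hmem : z ∈ spectrum ℂ y := by
        rw [hz']
        exact AlgHom.apply_mem_spectrum
          (⟨F, hF⟩ : WeakDual.characterSpace ℂ (Φ.range.topologicalClosure)) y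
      have h4 : (‖z‖₊ : ℝ≥0∞) ≤ spectralRadius ℂ y :=
        le_iSup₂ (f := fun k (_ : k ∈ spectrum ℂ y) => (‖k‖₊ : ℝ≥0∞)) z hmem
      refine h4.trans ((hr y).trans ?_)
      norm_cast
    have := hub
    rw [hsr] at this
    have h5 : ‖x‖₊ ≤ ‖Φ x‖₊ := by exact_mod_cast this
    exact h5
  have hlip : LipschitzOnWith 1 (Function.invFun Φ) (Set.range Φ) := by
    refine LipschitzOnWith.of_dist_le_mul ?_
    rintro y₁ ⟨a, rfl⟩ y₂ ⟨b, rfl⟩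
    have ha : Function.invFun Φ (Φ a) = a := Function.leftInverse_invFun hinj a
    have hb : Function.invFun Φ (Φ b) = b := Function.leftInverse_invFun hinj b
    rw [ha, hb, NNReal.coe_one, one_mul, dist_eq_norm, dist_eq_norm]
    calc ‖a - b‖ ≤ ‖Φ (a - b)‖ := key (a - b)
    _ = ‖Φ a - Φ b‖ := by rw [map_sub]
  exact hlip.continuousOn
end

section
/- Let C[0,1] denote the complex continuous functions on [0,1] with the sup norm, and let B = C[0,1] equipped with the locally convex topology given by the seminorms p_K(f) = sup{|f(x)| : x ∈ K} for K ranging over countable compact subsets of [0,1]. Then the identity map from B to (C[0,1], sup norm) is not continuous. -/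
open Set in
theorem stmt_10 :
    ¬ @Continuous _ _
      (⨅ (K : Set (Set.Icc (0:ℝ) 1)) (_ : K.Countable ∧ IsCompact K),
        TopologicalSpace.induced
          (fun f : C(Set.Icc (0:ℝ) 1, ℂ) => ContinuousMap.restrict K f)
          inferInstance)
      ContinuousMap.compactOpen
      (id : C(Set.Icc (0:ℝ) 1, ℂ) → C(Set.Icc (0:ℝ) 1, ℂ)) := by
  intro h
  set X := Set.Icc (0:ℝ) 1
  -- preimage of the unit ball is open in the iInf topology
  have hopen := @Continuous.isOpen_preimage _ _
      (⨅ (K : Set X) (_ : K.Countable ∧ IsCompact K),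
        TopologicalSpace.induced
          (fun f : C(X, ℂ) => ContinuousMap.restrict K f) inferInstance) _
      id h _ (Metric.isOpen_ball (x := (0 : C(X, ℂ))) (ε := 1))
  have h0 : (0 : C(X, ℂ)) ∈ id ⁻¹' Metric.ball (0 : C(X, ℂ)) 1 := by
    simp
  have hmem : (id ⁻¹' Metric.ball (0 : C(X, ℂ)) 1) ∈ @nhds _
      (⨅ (K : Set X) (_ : K.Countable ∧ IsCompact K),
        TopologicalSpace.induced
          (fun f : C(X, ℂ) => ContinuousMap.restrict K f) inferInstance)
      (0 : C(X, ℂ)) := @IsOpen.mem_nhds _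
      (⨅ (K : Set X) (_ : K.Countable ∧ IsCompact K),
        TopologicalSpace.induced
          (fun f : C(X, ℂ) => ContinuousMap.restrict K f) inferInstance) _ _ hopen h0
  rw [nhds_iInf] at hmem
  simp only [nhds_iInf, nhds_induced] at hmem
  rw [Filter.mem_iInf] at hmem
  obtain ⟨I, hIfin, V, hV, hs⟩ := hmem
  classical
  -- the union of the good sets in I
  set S : Set X := ⋃ K ∈ I ∩ {K : Set X | K.Countable ∧ IsCompact K}, K with hS
  have hScnt : S.Countable := by
    apply Set.Countable.biUnion ((hIfin.inter_of_left _).countable)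
    rintro K ⟨-, hK, -⟩
    exact hK
  have hScl : IsClosed S := by
    apply Set.Finite.isClosed_biUnion (hIfin.inter_of_left _)
    rintro K ⟨-, -, hK⟩
    exact hK.isClosed
  -- S ≠ univ since X is uncountable
  have hne : S ≠ Set.univ := by
    intro hSu
    have : Countable X := Set.countable_univ_iff.mp (hSu ▸ hScnt)
    have h1 : (Cardinal.mk X) ≤ Cardinal.aleph0 := Cardinal.mk_le_aleph0
    rw [Cardinal.mk_Icc_real (by norm_num : (0:ℝ) < 1)] at h1
    exact absurd h1 (not_le.mpr Cardinal.aleph0_lt_continuum)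
  obtain ⟨x₀, hx₀⟩ : ∃ x : X, x ∉ S := by
    by_contra hc
    push_neg at hc
    exact hne (Set.eq_univ_of_forall hc)
  -- Urysohn
  obtain ⟨f, hf0, hf1, -⟩ := exists_continuous_zero_one_of_isClosed hScl
    isClosed_singleton (Set.disjoint_singleton_right.mpr hx₀)
  set g : C(X, ℂ) := (2 : ℂ) • (ContinuousMap.comp ⟨Complex.ofReal, Complex.continuous_ofReal⟩ f)
  -- g vanishes on S
  have hgS : ∀ x ∈ S, g x = 0 := by
    intro x hx
    simp [g, hf0 hx, Pi.zero_apply]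
  -- g belongs to every V i
  have hgV : ∀ i : I, g ∈ V i := by
    rintro ⟨K, hKI⟩
    by_cases hK : K.Countable ∧ IsCompact K
    · have := hV ⟨K, hKI⟩
      rw [iInf_pos hK, Filter.mem_comap] at this
      obtain ⟨W, hW, hWsub⟩ := this
      apply hWsub
      have heq : ContinuousMap.restrict K g = ContinuousMap.restrict K (0 : C(X, ℂ)) := by
        ext x
        exact hgS x (Set.mem_biUnion ⟨hKI, hK⟩ x.2)
      show ContinuousMap.restrict K g ∈ W
      rw [heq]
      exact mem_of_mem_nhds hW
    · have := hV ⟨K, hKI⟩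
      rw [iInf_neg hK, Filter.mem_top] at this
      simp [this]
  -- hence g is in the preimage of the ball, so ‖g‖ < 1
  have hgball : g ∈ id ⁻¹' Metric.ball (0 : C(X, ℂ)) 1 := by
    rw [hs]
    exact Set.mem_iInter.mpr hgV
  have hlt : ‖g‖ < 1 := by
    simpa [dist_zero_right] using hgball
  -- but ‖g x₀‖ = 2
  have h2 : ‖g x₀‖ = 2 := by
    simp [g, hf1 (Set.mem_singleton x₀), Pi.one_apply]
  have := (g.norm_coe_le_norm x₀)
  rw [h2] at this
  linarith
end

section
/- Let A be a commutative unital Banach algebra over ℂ. If the spectral radius map r : A → ℝ satisfies r(x) = ‖x‖ for all x, then the closed unit ball is the largest bounded idempotent subset of A. -/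
open Filter Topology

theorem stmt_15 {A : Type*} [NormedCommRing A] [NormedAlgebra ℂ A] [CompleteSpace A]
    (h : ∀ x : A, spectralRadius ℂ x = (‖x‖₊ : ENNReal)) :
    Bornology.IsBounded (Metric.closedBall (0 : A) 1) ∧
    (∀ x ∈ Metric.closedBall (0 : A) 1, ∀ y ∈ Metric.closedBall (0 : A) 1,
      x * y ∈ Metric.closedBall (0 : A) 1) ∧
    (∀ S : Set A, (∀ x ∈ S, ∀ y ∈ S, x * y ∈ S) → Bornology.IsBounded S →
      S ⊆ Metric.closedBall (0 : A) 1) := by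
  refine ⟨Metric.isBounded_closedBall, ?_, ?_⟩
  · intro x hx y hy
    simp only [Metric.mem_closedBall, dist_zero_right] at *
    calc ‖x * y‖ ≤ ‖x‖ * ‖y‖ := norm_mul_le x y
      _ ≤ 1 * 1 := mul_le_mul hx hy (norm_nonneg _) zero_le_one
      _ = 1 := one_mul 1
  · intro S hmul hbdd x hx
    simp only [Metric.mem_closedBall, dist_zero_right]
    obtain ⟨C, hC⟩ := hbdd.exists_norm_le
    set D : ℝ := max C 1 with hD
    have hD1 : (1 : ℝ) ≤ D := le_max_right _ _
    have hD0 : (0 : ℝ) < D := lt_of_lt_of_le one_pos hD1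
    have hpow : ∀ n : ℕ, x ^ (n + 1) ∈ S := by
      intro n
      induction n with
      | zero => simpa using hx
      | succ k ih => rw [pow_succ]; exact hmul _ ih _ hx
    -- Gelfand's formula
    have htend : Tendsto (fun n : ℕ => ‖x ^ n‖ ^ ((1 : ℝ) / n)) atTop
        (𝓝 ‖x‖) := by
      have h1 := spectrum.pow_norm_pow_one_div_tendsto_nhds_spectralRadius x
      rw [h x] at h1
      have h2 := (ENNReal.tendsto_toReal ENNReal.coe_ne_top).comp h1
      convert h2 using 1
      · funext n
        simp only [Function.comp_apply]
        rw [ENNReal.toReal_ofReal (by positivity)]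
      · simp
    have htendD : Tendsto (fun n : ℕ => D ^ ((1 : ℝ) / n)) atTop (𝓝 1) := by
      have h0 : Tendsto (fun n : ℕ => (1 : ℝ) / n) atTop (𝓝 0) :=
        tendsto_one_div_atTop_nhds_zero_nat
      have := (Real.continuousAt_const_rpow (a := D) (b := 0) hD0.ne').tendsto.comp h0
      simpa [Real.rpow_zero, Function.comp_def] using this
    refine le_of_tendsto_of_tendsto' htend htendD ?_
    intro n
    rcases Nat.eq_zero_or_pos n with rfl | hn
    · simp only [pow_zero, norm_one]
      simp
    · have hxn : ‖x ^ n‖ ≤ D := by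
        obtain ⟨m, rfl⟩ := Nat.exists_eq_add_of_lt hn
        rw [show 0 + m + 1 = m + 1 from by omega]
        exact (hC _ (hpow m)).trans (le_max_left _ _)
      exact Real.rpow_le_rpow (norm_nonneg _) hxn (by positivity)
end
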